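/- arXiv:1809.10864 — 3 statements merged into one kernel-verified Lean document; each statement's English description precedes it below -/
import Mathlib

section
/- Let α ∈ (1,2) and β ∈ [−1,1]. Define the operator L f(x) = d_α ∫_ℝ (f(x+y) − f(x) − y f'(x)) / (2|y|^{1+α}) · ((1+β)·1_{y>0} + (1−β)·1_{y<0}) dy, where d_α = (∫_0^∞ (1−cos y)/y^{1+α} dy)^{−1}. Then for every f ∈ C_b^3(ℝ) and all x, z ∈ ℝ, |Lf(x+z) − Lf(x)| ≤ D_α |z| with D_α = 2 d_α ‖f''‖_∞/(α−1) + d_α ‖f'''‖_∞ / (2(2−α)). -/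
open MeasureTheory Set

/-- Normalizing constant `d_α = (∫_0^∞ (1 - cos y)/y^{1+α} dy)⁻¹`. -/
noncomputable def dcoef (α : ℝ) : ℝ :=
  (∫ y in Set.Ioi (0:ℝ), (1 - Real.cos y) / y ^ (1 + α))⁻¹

/-- Asymmetric fractional generator for `α ∈ (1,2)` (compensator `y`). -/
noncomputable def Lop (α β : ℝ) (f : ℝ → ℝ) (x : ℝ) : ℝ :=
  dcoef α * ∫ y : ℝ, (f (x + y) - f x - y * deriv f x) / (2 * |y| ^ (1 + α)) *
    ((1 + β) * Set.indicator (Set.Ioi (0:ℝ)) 1 y + (1 - β) * Set.indicator (Set.Iio (0:ℝ)) 1 y)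

/-!
Write `R f x y = f (x + y) - f x - y * f' x`, so that `L f x = d_α ∫ R f x y * w y / (2 |y|^(1+α)) dy`
with the skew weight `w`. The `x`-derivative of `R f x y` is `R f' x y`, which is bounded both by
`‖f'''‖ y² / 2` (Taylor) and by `2 ‖f''‖ |y|`, so `x ↦ R f x y` is Lipschitz with the minimum of the
two as constant. Against `|y|^(-1-α)` the quadratic bound is integrable near `0` (as `α < 2`) and the
linear one near `∞` (as `α > 1`), which gives `‖f'''‖ / (2 (2 - α)) + 2 ‖f''‖ / (α - 1)` per
half-line. Since `w y + w (-y) = 2`, the weight integrates every even function like the constant `1`.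
-/

theorem integral_mul_eq_integral_of_add_comp_neg_eq_two {w G : ℝ → ℝ}
    (hw : ∀ᵐ y, w y + w (-y) = 2) (hG : ∀ y, G (-y) = G y)
    (hwG : Integrable fun y => w y * G y) : ∫ y, w y * G y = ∫ y, G y := by
  have hwG' : Integrable fun y => w (-y) * G y := by simpa [hG] using hwG.comp_neg
  have hreflect : ∫ y, w (-y) * G y = ∫ y, w y * G y := by
    simpa [hG] using integral_neg_eq_self (fun y => w y * G y) volume
  have hsum : ∫ y, (w y + w (-y)) * G y = ∫ y, 2 * G y :=
    integral_congr_ae (hw.mono fun y hy => by simp only [hy])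
  simp only [add_mul, integral_add hwG hwG', hreflect, integral_const_mul] at hsum
  linarith

theorem integrable_comp_abs {H : ℝ → ℝ} (hH : IntegrableOn H (Ioi 0)) :
    Integrable fun x => H |x| := by
  have hH' := hH.integrable_indicator measurableSet_Ioi
  refine (hH'.add hH'.comp_neg).congr ((Measure.ae_ne volume 0).mono fun x hx => ?_)
  rcases hx.lt_or_gt with hx | hx
  · simp [hx, hx.not_gt, abs_of_neg hx]
  · simp [hx, hx.not_gt, abs_of_pos hx]

noncomputable def skewWeight (β y : ℝ) : ℝ :=
  (1 + β) * (Ioi (0 : ℝ)).indicator 1 y + (1 - β) * (Iio (0 : ℝ)).indicator 1 y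

section SkewWeight

variable {β : ℝ}

theorem measurable_skewWeight (β : ℝ) : Measurable (skewWeight β) := by
  unfold skewWeight
  fun_prop (disch := measurability)

theorem skewWeight_of_pos {y : ℝ} (hy : 0 < y) : skewWeight β y = 1 + β := by
  simp [skewWeight, hy, hy.not_gt]

theorem skewWeight_of_neg {y : ℝ} (hy : y < 0) : skewWeight β y = 1 - β := by
  simp [skewWeight, hy, hy.not_gt]

theorem skewWeight_zero : skewWeight β 0 = 0 := by
  simp [skewWeight]

theorem skewWeight_nonneg (hβ : β ∈ Icc (-1) 1) (y : ℝ) : 0 ≤ skewWeight β y := by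
  rcases lt_trichotomy y 0 with hy | rfl | hy
  · rw [skewWeight_of_neg hy]; linarith [hβ.2]
  · rw [skewWeight_zero]
  · rw [skewWeight_of_pos hy]; linarith [hβ.1]

theorem skewWeight_le_two (hβ : β ∈ Icc (-1) 1) (y : ℝ) : skewWeight β y ≤ 2 := by
  rcases lt_trichotomy y 0 with hy | rfl | hy
  · rw [skewWeight_of_neg hy]; linarith [hβ.1]
  · rw [skewWeight_zero]; norm_num
  · rw [skewWeight_of_pos hy]; linarith [hβ.2]

theorem skewWeight_add_skewWeight_neg {y : ℝ} (hy : y ≠ 0) :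
    skewWeight β y + skewWeight β (-y) = 2 := by
  rcases hy.lt_or_gt with hy | hy
  · rw [skewWeight_of_neg hy, skewWeight_of_pos (neg_pos.2 hy)]; ring
  · rw [skewWeight_of_pos hy, skewWeight_of_neg (neg_neg_iff_pos.2 hy)]; ring

theorem integrable_skewWeight_mul_comp_abs (hβ : β ∈ Icc (-1) 1) {H : ℝ → ℝ}
    (hH : IntegrableOn H (Ioi 0)) : Integrable fun y => skewWeight β y * H |y| := by
  refine (integrable_comp_abs hH).bdd_mul (c := 2) (measurable_skewWeight β).aestronglyMeasurable
    (ae_of_all _ fun y => ?_)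
  rw [Real.norm_eq_abs, abs_of_nonneg (skewWeight_nonneg hβ y)]
  exact skewWeight_le_two hβ y

theorem integral_skewWeight_mul_comp_abs (hβ : β ∈ Icc (-1) 1) {H : ℝ → ℝ}
    (hH : IntegrableOn H (Ioi 0)) :
    ∫ y, skewWeight β y * H |y| = 2 * ∫ r in Ioi 0, H r := by
  rw [← integral_comp_abs]
  exact integral_mul_eq_integral_of_add_comp_neg_eq_two
    ((Measure.ae_ne volume 0).mono fun y hy => skewWeight_add_skewWeight_neg hy)
    (fun y => by rw [abs_neg]) (integrable_skewWeight_mul_comp_abs hβ hH)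

end SkewWeight

noncomputable def minKernel (α A B r : ℝ) : ℝ :=
  min (A * r ^ 2) (B * r) / r ^ (1 + α)

section MinKernel

variable {α A B : ℝ}

theorem minKernel_nonneg (hA : 0 ≤ A) (hB : 0 ≤ B) {r : ℝ} (hr : 0 ≤ r) :
    0 ≤ minKernel α A B r :=
  div_nonneg (le_min (by positivity) (by positivity)) (Real.rpow_nonneg hr _)

theorem minKernel_le_left {r : ℝ} (hr : 0 < r) : minKernel α A B r ≤ A * r ^ (1 - α) := by
  calc minKernel α A B r ≤ A * r ^ (2 : ℝ) / r ^ (1 + α) := by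
        rw [Real.rpow_two]
        exact div_le_div_of_nonneg_right (min_le_left _ _) (Real.rpow_nonneg hr.le _)
    _ = A * r ^ (1 - α) := by rw [mul_div_assoc, ← Real.rpow_sub hr]; ring_nf

theorem minKernel_le_right {r : ℝ} (hr : 0 < r) : minKernel α A B r ≤ B * r ^ (-α) := by
  calc minKernel α A B r ≤ B * r ^ (1 : ℝ) / r ^ (1 + α) := by
        rw [Real.rpow_one]
        exact div_le_div_of_nonneg_right (min_le_right _ _) (Real.rpow_nonneg hr.le _)
    _ = B * r ^ (-α) := by rw [mul_div_assoc, ← Real.rpow_sub hr]; ring_nf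

theorem measurable_minKernel (α A B : ℝ) : Measurable (minKernel α A B) := by
  unfold minKernel
  fun_prop

theorem integrableOn_minKernel_Ioc (hα : α < 2) (hA : 0 ≤ A) (hB : 0 ≤ B) :
    IntegrableOn (minKernel α A B) (Ioc 0 1) := by
  refine Integrable.mono' ((intervalIntegral.intervalIntegrable_rpow'
      (by linarith : (-1 : ℝ) < 1 - α)).1.const_mul A)
    (measurable_minKernel α A B).aestronglyMeasurable
    ((ae_restrict_iff' measurableSet_Ioc).2 (ae_of_all _ fun r hr => ?_))
  rw [Real.norm_eq_abs, abs_of_nonneg (minKernel_nonneg hA hB hr.1.le)]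
  exact minKernel_le_left hr.1

theorem integrableOn_minKernel_Ioi_one (hα : 1 < α) (hA : 0 ≤ A) (hB : 0 ≤ B) :
    IntegrableOn (minKernel α A B) (Ioi 1) := by
  refine Integrable.mono' ((integrableOn_Ioi_rpow_of_lt (by linarith : -α < -1)
      one_pos).const_mul B)
    (measurable_minKernel α A B).aestronglyMeasurable
    ((ae_restrict_iff' measurableSet_Ioi).2 (ae_of_all _ fun r hr => ?_))
  have hr : (0 : ℝ) < r := one_pos.trans hr
  rw [Real.norm_eq_abs, abs_of_nonneg (minKernel_nonneg hA hB hr.le)]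
  exact minKernel_le_right hr

theorem setIntegral_minKernel_Ioc_le (hα : α < 2) (hA : 0 ≤ A) (hB : 0 ≤ B) :
    ∫ r in Ioc 0 1, minKernel α A B r ≤ A / (2 - α) := by
  have hpow : ∫ r in Ioc (0 : ℝ) 1, r ^ (1 - α) = 1 / (2 - α) := by
    rw [← intervalIntegral.integral_of_le zero_le_one,
      integral_rpow (Or.inl (by linarith : (-1 : ℝ) < 1 - α)),
      Real.zero_rpow (by linarith : 1 - α + 1 ≠ 0), Real.one_rpow]
    ring_nf
  calc ∫ r in Ioc 0 1, minKernel α A B r ≤ ∫ r in Ioc 0 1, A * r ^ (1 - α) :=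
        setIntegral_mono_on (integrableOn_minKernel_Ioc hα hA hB)
          ((intervalIntegral.intervalIntegrable_rpow'
            (by linarith : (-1 : ℝ) < 1 - α)).1.const_mul A)
          measurableSet_Ioc fun r hr => minKernel_le_left hr.1
    _ = A / (2 - α) := by rw [integral_const_mul, hpow, mul_one_div]

theorem setIntegral_minKernel_Ioi_one_le (hα : 1 < α) (hA : 0 ≤ A) (hB : 0 ≤ B) :
    ∫ r in Ioi 1, minKernel α A B r ≤ B / (α - 1) := by
  have hpow : ∫ r in Ioi (1 : ℝ), r ^ (-α) = 1 / (α - 1) := by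
    rw [integral_Ioi_rpow_of_lt (by linarith : -α < -1) one_pos, Real.one_rpow,
      show -α + 1 = -(α - 1) by ring, div_neg, neg_div, neg_neg]
  calc ∫ r in Ioi 1, minKernel α A B r ≤ ∫ r in Ioi 1, B * r ^ (-α) :=
        setIntegral_mono_on (integrableOn_minKernel_Ioi_one hα hA hB)
          ((integrableOn_Ioi_rpow_of_lt (by linarith : -α < -1) one_pos).const_mul B)
          measurableSet_Ioi fun r hr => minKernel_le_right (one_pos.trans hr)
    _ = B / (α - 1) := by rw [integral_const_mul, hpow, mul_one_div]

theorem integrableOn_minKernel (hα : α ∈ Ioo 1 2) (hA : 0 ≤ A) (hB : 0 ≤ B) :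
    IntegrableOn (minKernel α A B) (Ioi 0) := by
  rw [← Ioc_union_Ioi_eq_Ioi zero_le_one]
  exact (integrableOn_minKernel_Ioc hα.2 hA hB).union
    (integrableOn_minKernel_Ioi_one hα.1 hA hB)

theorem setIntegral_minKernel_le (hα : α ∈ Ioo 1 2) (hA : 0 ≤ A) (hB : 0 ≤ B) :
    ∫ r in Ioi 0, minKernel α A B r ≤ A / (2 - α) + B / (α - 1) := by
  rw [← Ioc_union_Ioi_eq_Ioi zero_le_one, setIntegral_union (Ioc_disjoint_Ioi le_rfl)
    measurableSet_Ioi (integrableOn_minKernel_Ioc hα.2 hA hB)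
    (integrableOn_minKernel_Ioi_one hα.1 hA hB)]
  exact add_le_add (setIntegral_minKernel_Ioc_le hα.2 hA hB)
    (setIntegral_minKernel_Ioi_one_le hα.1 hA hB)

end MinKernel

noncomputable def firstOrderRemainder (f : ℝ → ℝ) (x y : ℝ) : ℝ :=
  f (x + y) - f x - y * deriv f x

section FirstOrderRemainder

variable {f : ℝ → ℝ}

theorem abs_firstOrderRemainder_le_sq (hf : ContDiff ℝ 2 f) {C : ℝ}
    (hC : ∀ u, |deriv (deriv f) u| ≤ C) (x y : ℝ) :
    |firstOrderRemainder f x y| ≤ C / 2 * y ^ 2 := by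
  rcases eq_or_ne y 0 with rfl | hy
  · simp [firstOrderRemainder]
  obtain ⟨ξ, -, hξ⟩ := taylor_mean_remainder_lagrange_iteratedDeriv (n := 1)
    (by simpa using hy : x ≠ x + y) hf.contDiffOn
  have hderiv : derivWithin f (uIcc x (x + y)) x = deriv f x :=
    (hf.differentiable two_ne_zero x).derivWithin
      (uniqueDiffOn_uIcc (by simpa using hy) x left_mem_uIcc)
  simp only [taylor_within_apply, Finset.sum_range_succ, Finset.sum_range_zero,
    iteratedDerivWithin_zero, iteratedDerivWithin_one, hderiv, iteratedDeriv_succ,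
    iteratedDeriv_zero] at hξ
  norm_num at hξ
  rw [show firstOrderRemainder f x y = deriv (deriv f) ξ * y ^ 2 / 2 by
      unfold firstOrderRemainder; linarith,
    abs_div, abs_mul, abs_of_nonneg (sq_nonneg y), abs_two]
  nlinarith [hC ξ, sq_nonneg y]

theorem abs_firstOrderRemainder_le_min (hf : ContDiff ℝ 2 f) {C₁ C₂ : ℝ}
    (h₁ : ∀ u, |deriv f u| ≤ C₁) (h₂ : ∀ u, |deriv (deriv f) u| ≤ C₂) (x y : ℝ) :
    |firstOrderRemainder f x y| ≤ min (C₂ / 2 * y ^ 2) (2 * C₁ * |y|) := by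
  refine le_min (abs_firstOrderRemainder_le_sq hf h₂ x y) ?_
  have hlip : |f (x + y) - f x| ≤ C₁ * |y| := by
    simpa using Convex.norm_image_sub_le_of_norm_deriv_le
      (fun u _ => hf.differentiable two_ne_zero u) (fun u _ => h₁ u) convex_univ
      (mem_univ x) (mem_univ (x + y))
  calc |firstOrderRemainder f x y| ≤ |f (x + y) - f x| + |y * deriv f x| := abs_sub _ _
    _ ≤ C₁ * |y| + |y| * C₁ := by
        rw [abs_mul]; exact add_le_add hlip (mul_le_mul_of_nonneg_left (h₁ x) (abs_nonneg y))
    _ = 2 * C₁ * |y| := by ring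

theorem hasDerivAt_firstOrderRemainder (hf : ContDiff ℝ 2 f) (x y : ℝ) :
    HasDerivAt (fun u => firstOrderRemainder f u y) (firstOrderRemainder (deriv f) x y) x := by
  have hf' : Differentiable ℝ (deriv f) :=
    (contDiff_succ_iff_deriv.mp hf).2.2.differentiable one_ne_zero
  have hf : Differentiable ℝ f := hf.differentiable two_ne_zero
  exact (((hf (x + y)).hasDerivAt.comp_add_const x y).sub (hf x).hasDerivAt).sub
    ((hf' x).hasDerivAt.const_mul y)

theorem abs_firstOrderRemainder_sub_le (hf : ContDiff ℝ 3 f) {C₂ C₃ : ℝ}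
    (h₂ : ∀ u, |deriv (deriv f) u| ≤ C₂) (h₃ : ∀ u, |deriv (deriv (deriv f)) u| ≤ C₃)
    (x y z : ℝ) :
    |firstOrderRemainder f (x + z) y - firstOrderRemainder f x y| ≤
      min (C₃ / 2 * y ^ 2) (2 * C₂ * |y|) * |z| := by
  have hf' : ContDiff ℝ 2 (deriv f) := (contDiff_succ_iff_deriv.mp hf).2.2
  simpa using Convex.norm_image_sub_le_of_norm_hasDerivWithin_le
    (fun u _ => (hasDerivAt_firstOrderRemainder (hf.of_le (by norm_num)) u y).hasDerivWithinAt)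
    (fun u _ => abs_firstOrderRemainder_le_min hf' h₂ h₃ u y) convex_univ
    (mem_univ x) (mem_univ (x + z))

end FirstOrderRemainder

theorem dcoef_nonneg (α : ℝ) : 0 ≤ dcoef α :=
  inv_nonneg.2 <| setIntegral_nonneg measurableSet_Ioi fun y hy =>
    div_nonneg (sub_nonneg.2 (Real.cos_le_one y)) (Real.rpow_nonneg (le_of_lt hy) _)

theorem Lop_eq (α β : ℝ) (f : ℝ → ℝ) (x : ℝ) :
    Lop α β f x = dcoef α *
      ∫ y, firstOrderRemainder f x y / (2 * |y| ^ (1 + α)) * skewWeight β y :=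
  rfl

theorem abs_div_mul_skewWeight_le {α β A B n y : ℝ} (hβ : β ∈ Icc (-1) 1)
    (hn : |n| ≤ min (A * y ^ 2) (B * |y|)) :
    |n / (2 * |y| ^ (1 + α)) * skewWeight β y| ≤ skewWeight β y * minKernel α A B |y| / 2 := by
  have hw := skewWeight_nonneg hβ y
  have hd : 0 ≤ |y| ^ (1 + α) := Real.rpow_nonneg (abs_nonneg y) _
  rw [abs_mul, abs_div, abs_of_nonneg hw, abs_of_nonneg (by positivity : (0 : ℝ) ≤ 2 * _),
    minKernel, sq_abs]
  calc |n| / (2 * |y| ^ (1 + α)) * skewWeight β y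
      ≤ min (A * y ^ 2) (B * |y|) / (2 * |y| ^ (1 + α)) * skewWeight β y := by gcongr
    _ = skewWeight β y * (min (A * y ^ 2) (B * |y|) / |y| ^ (1 + α)) / 2 := by ring

theorem integrable_firstOrderRemainder_div_mul_skewWeight {α β : ℝ} (hα : α ∈ Ioo 1 2)
    (hβ : β ∈ Icc (-1) 1) {f : ℝ → ℝ} (hf : ContDiff ℝ 2 f) {C₁ C₂ : ℝ}
    (h₁ : ∀ u, |deriv f u| ≤ C₁) (h₂ : ∀ u, |deriv (deriv f) u| ≤ C₂) (x : ℝ) :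
    Integrable fun y => firstOrderRemainder f x y / (2 * |y| ^ (1 + α)) * skewWeight β y := by
  have hC₁ : 0 ≤ C₁ := (abs_nonneg _).trans (h₁ 0)
  have hC₂ : 0 ≤ C₂ := (abs_nonneg _).trans (h₂ 0)
  have hcont : Continuous fun y => firstOrderRemainder f x y := by
    have := hf.continuous
    unfold firstOrderRemainder
    fun_prop
  refine ((integrable_skewWeight_mul_comp_abs hβ
      (integrableOn_minKernel hα (by positivity : 0 ≤ C₂ / 2) (by positivity : 0 ≤ 2 * C₁))).div_const
      2).mono' ?_ (ae_of_all _ fun y => abs_div_mul_skewWeight_le hβ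
        (abs_firstOrderRemainder_le_min hf h₁ h₂ x y))
  exact ((hcont.measurable.div (by fun_prop)).mul (measurable_skewWeight β)).aestronglyMeasurable

theorem norm_firstOrderRemainder_div_mul_skewWeight_sub_le {α β : ℝ} (hβ : β ∈ Icc (-1) 1)
    {f : ℝ → ℝ} (hf : ContDiff ℝ 3 f) {C₂ C₃ : ℝ} (h₂ : ∀ u, |deriv (deriv f) u| ≤ C₂)
    (h₃ : ∀ u, |deriv (deriv (deriv f)) u| ≤ C₃) (x y z : ℝ) :
    ‖firstOrderRemainder f (x + z) y / (2 * |y| ^ (1 + α)) * skewWeight β y -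
      firstOrderRemainder f x y / (2 * |y| ^ (1 + α)) * skewWeight β y‖ ≤
      skewWeight β y * minKernel α (C₃ / 2 * |z|) (2 * C₂ * |z|) |y| / 2 := by
  rw [Real.norm_eq_abs, ← sub_mul, ← sub_div]
  refine abs_div_mul_skewWeight_le hβ ?_
  simpa only [min_mul_of_nonneg _ _ (abs_nonneg z), mul_right_comm _ _ |z|]
    using abs_firstOrderRemainder_sub_le hf h₂ h₃ x y z

theorem integral_skewWeight_mul_minKernel_div_two_le {α β A B : ℝ} (hα : α ∈ Ioo 1 2)
    (hβ : β ∈ Icc (-1) 1) (hA : 0 ≤ A) (hB : 0 ≤ B) :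
    ∫ y, skewWeight β y * minKernel α A B |y| / 2 ≤ A / (2 - α) + B / (α - 1) := by
  rw [integral_div, integral_skewWeight_mul_comp_abs hβ (integrableOn_minKernel hα hA hB)]
  linarith [setIntegral_minKernel_le hα hA hB]

theorem Lop_lipschitz_general (α β : ℝ) (hα : α ∈ Set.Ioo (1:ℝ) 2) (hβ : β ∈ Set.Icc (-1:ℝ) 1)
    (f : ℝ → ℝ) (hf : ContDiff ℝ 3 f)
    (M1 M2 M3 : ℝ)
    (h1 : ∀ x, |deriv f x| ≤ M1)
    (h2 : ∀ x, |deriv (deriv f) x| ≤ M2) (h3 : ∀ x, |deriv (deriv (deriv f)) x| ≤ M3)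
    (x z : ℝ) :
    |Lop α β f (x + z) - Lop α β f x| ≤
      (2 * dcoef α * M2 / (α - 1) + dcoef α * M3 / (2 * (2 - α))) * |z| := by
  have hM₂ : 0 ≤ M2 := (abs_nonneg _).trans (h2 0)
  have hM₃ : 0 ≤ M3 := (abs_nonneg _).trans (h3 0)
  have hA : 0 ≤ M3 / 2 * |z| := by positivity
  have hB : 0 ≤ 2 * M2 * |z| := by positivity
  have hf₂ : ContDiff ℝ 2 f := hf.of_le (by norm_num)
  have hdcoef := dcoef_nonneg α
  calc |Lop α β f (x + z) - Lop α β f x|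
      ≤ dcoef α * ∫ y, skewWeight β y * minKernel α (M3 / 2 * |z|) (2 * M2 * |z|) |y| / 2 := by
        rw [Lop_eq, Lop_eq, ← mul_sub, ← integral_sub
          (integrable_firstOrderRemainder_div_mul_skewWeight hα hβ hf₂ h1 h2 _)
          (integrable_firstOrderRemainder_div_mul_skewWeight hα hβ hf₂ h1 h2 _),
          abs_mul, abs_of_nonneg hdcoef]
        gcongr
        exact norm_integral_le_of_norm_le
          ((integrable_skewWeight_mul_comp_abs hβ (integrableOn_minKernel hα hA hB)).div_const 2)
          (ae_of_all _ (norm_firstOrderRemainder_div_mul_skewWeight_sub_le hβ hf h2 h3 x · z))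
    _ ≤ dcoef α * ((M3 / 2 * |z|) / (2 - α) + (2 * M2 * |z|) / (α - 1)) := by
        gcongr
        exact integral_skewWeight_mul_minKernel_div_two_le hα hβ hA hB
    _ = (2 * dcoef α * M2 / (α - 1) + dcoef α * M3 / (2 * (2 - α))) * |z| := by
        have : 2 - α ≠ 0 := by linarith [hα.2]
        have : α - 1 ≠ 0 := by linarith [hα.1]
        field_simp
        ring

/-- Lipschitz estimate for `L f` when `α ∈ (1,2)`. -/
theorem Lop_lipschitz (α β : ℝ) (hα : α ∈ Set.Ioo (1:ℝ) 2) (hβ : β ∈ Set.Icc (-1:ℝ) 1)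
    (f : ℝ → ℝ) (hf : ContDiff ℝ 3 f)
    (M0 M1 M2 M3 : ℝ)
    (h0 : ∀ x, |f x| ≤ M0) (h1 : ∀ x, |deriv f x| ≤ M1)
    (h2 : ∀ x, |deriv (deriv f) x| ≤ M2) (h3 : ∀ x, |deriv (deriv (deriv f)) x| ≤ M3)
    (x z : ℝ) :
    |Lop α β f (x + z) - Lop α β f x| ≤
      (2 * dcoef α * M2 / (α - 1) + dcoef α * M3 / (2 * (2 - α))) * |z| :=
  Lop_lipschitz_general α β hα hβ f hf M1 M2 M3 h1 h2 h3 x z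
end

section
/- Let α = 1 and C > 0. Suppose for each s ∈ (0,1] the random variable Ŷ_s has a density p(s,·) with p(s,y) ≤ C s^{−1}(1 ∧ s^2/|y|^2). Then for any a ∈ (0,1), ∫_0^1 E[|Ŷ_s|·1_{|Ŷ_s| ≤ a^{−1}}] ds ≤ C'(1 + log(a^{−1})) for a constant C' depending only on C. -/
/-!
For fixed `s`, the density bound gives `p s y ≤ C s / y²`, hence the weak-`L¹` tail estimate
`P(|Ŷ_s| > t) ≤ 2Cs/t`. By the layer-cake formula, splitting the `t`-integral at `t = s`
(where `P ≤ 1` is used instead), `E[|Ŷ_s|; |Ŷ_s| ≤ M] ≤ s + 2Cs log(M/s)`. With `M = a⁻¹` and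
`s log s⁻¹ < 1` this is at most `1 + 2C(1 + log a⁻¹)` uniformly in `s ∈ (0,1]`.
-/

open MeasureTheory Set

lemma integral_inv_sq_abs_gt {t : ℝ} (ht : 0 < t) :
    ∫ y in {y : ℝ | t < |y|}, (y ^ 2)⁻¹ = 2 / t := by
  have hIoi : ∫ y in Ioi t, (y ^ 2)⁻¹ = t⁻¹ := by
    have hrpow : ∀ y ∈ Ioi t, (y ^ 2)⁻¹ = y ^ (-2 : ℝ) := fun y (hy : t < y) => by
      rw [Real.rpow_neg (ht.trans hy).le, Real.rpow_two]
    rw [setIntegral_congr_fun measurableSet_Ioi hrpow, integral_Ioi_rpow_of_lt (by norm_num) ht]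
    norm_num [Real.rpow_neg_one]
  calc ∫ y in {y : ℝ | t < |y|}, (y ^ 2)⁻¹
      = ∫ y, (Ioi t).indicator (fun x => (x ^ 2)⁻¹) |y| := by
        rw [← integral_indicator (measurableSet_lt measurable_const measurable_abs)]
        congr 1 with y
        simp only [indicator, mem_ofPred_eq, mem_Ioi, sq_abs]
    _ = 2 * ∫ y in Ioi t, (y ^ 2)⁻¹ := by
        rw [integral_comp_abs, setIntegral_indicator measurableSet_Ioi,
          inter_eq_right.2 (Ioi_subset_Ioi ht.le)]
    _ = 2 / t := by rw [hIoi, div_eq_mul_inv]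

lemma integrableOn_inv_sq_abs_gt {t : ℝ} (ht : 0 < t) :
    IntegrableOn (fun y : ℝ => (y ^ 2)⁻¹) {y : ℝ | t < |y|} := by
  by_contra h
  have := integral_inv_sq_abs_gt ht
  rw [integral_undef h] at this
  exact (div_pos two_pos ht).ne this

section

variable {Ω : Type*} [MeasurableSpace Ω] {μ : Measure Ω}

lemma measureReal_abs_gt_le_of_density_le {Y : Ω → ℝ} {p : ℝ → ℝ} {K t : ℝ} (ht : 0 < t)
    (hdens : ∀ A : Set ℝ, MeasurableSet A → μ.real {ω | Y ω ∈ A} = ∫ y in A, p y)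
    (hp0 : ∀ y, 0 ≤ p y) (hp : ∀ y, p y ≤ K * (y ^ 2)⁻¹) :
    μ.real {ω | t < |Y ω|} ≤ 2 * K / t := by
  calc μ.real {ω | t < |Y ω|} = ∫ y in {y : ℝ | t < |y|}, p y :=
        hdens _ (measurableSet_lt measurable_const measurable_abs)
    _ ≤ ∫ y in {y : ℝ | t < |y|}, K * (y ^ 2)⁻¹ :=
        integral_mono_of_nonneg (ae_of_all _ hp0)
          ((integrableOn_inv_sq_abs_gt ht).const_mul K) (ae_of_all _ hp)
    _ = 2 * K / t := by rw [integral_const_mul, integral_inv_sq_abs_gt ht]; ring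

lemma integral_indicator_abs_le_of_tail_le [IsProbabilityMeasure μ] {Y : Ω → ℝ} {K s M : ℝ}
    (hK : 0 ≤ K) (hs : 0 < s) (hsM : s ≤ M)
    (htail : ∀ t, 0 < t → μ.real {ω | t < |Y ω|} ≤ K / t) :
    ∫ ω, {ω | |Y ω| ≤ M}.indicator (fun ω => |Y ω|) ω ∂μ ≤ s + K * Real.log (M / s) := by
  set g := {ω | |Y ω| ≤ M}.indicator (fun ω => |Y ω|)
  have hg_nonneg : 0 ≤ g := indicator_nonneg fun ω _ => abs_nonneg (Y ω)
  have hlog : 0 ≤ Real.log (M / s) := Real.log_nonneg ((one_le_div hs).2 hsM)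
  by_cases hint : Integrable g μ
  swap
  · -- `Y` need not be measurable; then the Bochner integral is `0`.
    rw [integral_undef hint]; positivity
  set F : ℝ → ℝ := fun t => μ.real {ω | t < g ω}
  have hF_anti : Antitone F := fun t t' htt' =>
    measureReal_mono fun ω (h : t' < g ω) => htt'.trans_lt h
  have hg_le_abs : ∀ ω, g ω ≤ |Y ω| := indicator_le_self' fun ω _ => abs_nonneg (Y ω)
  have hg_le_M : ∀ ω, g ω ≤ M := indicator_le' (fun _ h => h) fun _ _ => hs.le.trans hsM
  have hF_zero : ∀ t, M < t → F t = 0 := fun t ht => by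
    rw [show F t = μ.real ∅ from congrArg μ.real <|
      eq_empty_of_forall_notMem fun ω (h : t < g ω) => (hg_le_M ω).not_gt (ht.trans h),
      measureReal_empty]
  have hinv : IntervalIntegrable (fun t => K / t) volume s M :=
    ContinuousOn.intervalIntegrable_of_Icc hsM <|
      continuousOn_const.div continuousOn_id fun t ht => (hs.trans_le ht.1).ne'
  calc ∫ ω, g ω ∂μ = ∫ t in Ioi 0, F t := hint.integral_eq_integral_meas_lt (ae_of_all _ hg_nonneg)
    _ = ∫ t in Ioc 0 M, F t :=
        setIntegral_eq_of_subset_of_forall_sdiff_eq_zero measurableSet_Ioi Ioc_subset_Ioi_self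
          fun t ht => hF_zero t (not_le.1 fun h => ht.2 ⟨ht.1, h⟩)
    _ = (∫ t in 0..s, F t) + ∫ t in s..M, F t := by
        rw [← intervalIntegral.integral_of_le (hs.le.trans hsM),
          intervalIntegral.integral_add_adjacent_intervals hF_anti.intervalIntegrable
            hF_anti.intervalIntegrable]
    _ ≤ (∫ _ in 0..s, (1 : ℝ)) + ∫ t in s..M, K / t := by
        gcongr
        · exact intervalIntegral.integral_mono_on hs.le hF_anti.intervalIntegrable
            intervalIntegrable_const fun t _ => measureReal_le_one
        · exact intervalIntegral.integral_mono_on hsM hF_anti.intervalIntegrable hinv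
            fun t ht => (measureReal_mono fun ω (h : t < g ω) => h.trans_le (hg_le_abs ω)).trans
              (htail t (hs.trans_le ht.1))
    _ = s + K * Real.log (M / s) := by
        simp_rw [div_eq_mul_inv K]
        rw [intervalIntegral.integral_const_mul, integral_inv_of_pos hs (hs.trans_le hsM)]
        simp

lemma integral_indicator_abs_le_of_density_le [IsProbabilityMeasure μ] {Y : Ω → ℝ}
    {p : ℝ → ℝ} {C s M : ℝ} (hC : 0 ≤ C) (hs : 0 < s) (hsM : s ≤ M)
    (hdens : ∀ A : Set ℝ, MeasurableSet A → μ.real {ω | Y ω ∈ A} = ∫ y in A, p y)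
    (hp0 : ∀ y, 0 ≤ p y) (hp : ∀ y, p y ≤ C * s⁻¹ * min 1 (s ^ 2 / y ^ 2)) :
    ∫ ω, {ω | |Y ω| ≤ M}.indicator (fun ω => |Y ω|) ω ∂μ ≤
      s + 2 * C * s * Real.log (M / s) := by
  have hp' : ∀ y, p y ≤ C * s * (y ^ 2)⁻¹ := fun y =>
    calc p y ≤ C * s⁻¹ * (s ^ 2 / y ^ 2) := (hp y).trans (by gcongr; exact min_le_right _ _)
      _ = C * s * (y ^ 2)⁻¹ := by field_simp
  have := integral_indicator_abs_le_of_tail_le (μ := μ) (K := 2 * (C * s)) (by positivity) hs hsM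
    fun t ht => measureReal_abs_gt_le_of_density_le ht hdens hp0 hp'
  linarith

end

lemma add_mul_log_div_le {K s M : ℝ} (hK : 0 ≤ K) (hs : 0 < s) (hs1 : s ≤ 1) (hM : 1 ≤ M) :
    s + K * s * Real.log (M / s) ≤ 1 + K * (1 + Real.log M) := by
  have hlogM : 0 ≤ Real.log M := Real.log_nonneg hM
  have hslog : -(Real.log s * s) ≤ 1 := (neg_le_abs _).trans (Real.abs_log_mul_self_lt s hs hs1).le
  rw [Real.log_div (by positivity) hs.ne']
  nlinarith [mul_le_of_le_one_left hlogM hs1]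

/-- Truncated first-moment estimate for a family with the stable heat-kernel bound,
`α = 1` case. -/
theorem truncated_moment_family_bound_one (C : ℝ) (hC : 0 < C) :
    ∃ C' : ℝ, 0 < C' ∧
      ∀ (Ω : Type) [MeasureSpace Ω] [IsProbabilityMeasure (volume : Measure Ω)],
      ∀ (Y : ℝ → Ω → ℝ) (p : ℝ → ℝ → ℝ),
        (∀ s ∈ Set.Ioc (0:ℝ) 1, ∀ A : Set ℝ, MeasurableSet A →
          (volume {ω | Y s ω ∈ A}).toReal = ∫ y in A, p s y) →
        (∀ s ∈ Set.Ioc (0:ℝ) 1, ∀ y, 0 ≤ p s y) →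
        (∀ s ∈ Set.Ioc (0:ℝ) 1, ∀ y : ℝ,
          p s y ≤ C * s⁻¹ * min 1 (s ^ 2 / y ^ 2)) →
        ∀ a ∈ Set.Ioo (0:ℝ) 1,
          (∫ s in Set.Ioc (0:ℝ) 1,
            ∫ ω, Set.indicator {ω | |Y s ω| ≤ a⁻¹} (fun ω => |Y s ω|) ω) ≤
              C' * (1 + Real.log a⁻¹) := by
  refine ⟨1 + 2 * C, by positivity, fun Ω _ _ Y p hdens hp0 hp a ha => ?_⟩
  have hM : 1 ≤ a⁻¹ := (one_le_inv₀ ha.1).2 ha.2.le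
  have hbound : ∀ s ∈ Ioc (0 : ℝ) 1,
      ∫ ω, {ω | |Y s ω| ≤ a⁻¹}.indicator (fun ω => |Y s ω|) ω ≤
        1 + 2 * C * (1 + Real.log a⁻¹) := fun s hs =>
    (integral_indicator_abs_le_of_density_le hC.le hs.1 (hs.2.trans hM) (hdens s hs) (hp0 s hs)
      (hp s hs)).trans (add_mul_log_div_le (by positivity) hs.1 hs.2 hM)
  calc _ ≤ ∫ _ in Ioc (0 : ℝ) 1, 1 + 2 * C * (1 + Real.log a⁻¹) :=
        integral_mono_of_nonneg
          (ae_of_all _ fun s => integral_nonneg (indicator_nonneg fun ω _ => abs_nonneg (Y s ω)))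
          (integrable_const _) ((ae_restrict_iff' measurableSet_Ioc).2 (ae_of_all _ hbound))
    _ = 1 + 2 * C * (1 + Real.log a⁻¹) := by simp
    _ ≤ (1 + 2 * C) * (1 + Real.log a⁻¹) := by nlinarith [Real.log_nonneg hM]
end

section
/- Smoothing inequality: Let μ and ν be probability measures on ℝ, and suppose ν has a density bounded by a constant M > 0. Suppose there is a constant D > 0 such that |∫ f dμ − ∫ f dν| ≤ D·(‖f‖_∞ + ‖f'‖_∞ + ‖f''‖_∞ + ‖f'''‖_∞) for all f ∈ C_b^3(ℝ). Then the Kolmogorov distance satisfies sup_{x∈ℝ} |μ((−∞,x]) − ν((−∞,x])| ≤ C (D^{1/4} + D) for a constant C depending only on M. -/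
/-!
Write `F_κ(x) = κ(-∞, x]`. A smooth cutoff `φ` equal to `1` on `(-∞, t]` and to `0` on
`[t + ε, ∞)` has `|φ⁽ᵏ⁾| ≤ K ε⁻ᵏ` and satisfies `F_κ(t) ≤ ∫ φ dκ ≤ F_κ(t + ε)` for every finite
measure `κ`. Comparing `μ` and `ν` through such cutoffs at `t = x` and `t = x - ε` bounds
`|F_μ(x) - F_ν(x)|` by the smooth discrepancy `D (1 + ε⁻¹ + ε⁻² + ε⁻³)` plus the increment
`F_ν(t + ε) - F_ν(t) ≤ M ε`. For `ε = D^{1/4}` every term is a multiple of some `εᵏ` with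
`1 ≤ k ≤ 4`, and `εᵏ ≤ ε + ε⁴ = D^{1/4} + D`.
-/

open MeasureTheory Set Filter Topology Real

theorem Real.smoothTransition.exists_abs_iteratedDeriv_le (n : ℕ) :
    ∃ K, ∀ x, |iteratedDeriv n smoothTransition x| ≤ K := by
  cases n with
  | zero => exact ⟨1, fun x => by simpa [abs_of_nonneg (nonneg x)] using le_one x⟩
  | succ n =>
    have hsupp : HasCompactSupport (iteratedDeriv (n + 1) smoothTransition) := by
      refine HasCompactSupport.intro (K := Icc 0 1) isCompact_Icc fun x hx => ?_
      rcases not_and_or.mp hx with hx | hx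
      · have hconst : smoothTransition =ᶠ[𝓝 x] fun _ => 0 := by
          filter_upwards [Iio_mem_nhds (not_le.mp hx)] with y hy using zero_of_nonpos hy.le
        simp [hconst.iteratedDeriv_eq]
      · have hconst : smoothTransition =ᶠ[𝓝 x] fun _ => 1 := by
          filter_upwards [Ioi_mem_nhds (not_le.mp hx)] with y hy using one_of_one_le hy.le
        simp [hconst.iteratedDeriv_eq, iteratedDeriv_const]
    have hcont := smoothTransition.contDiff.continuous_iteratedDeriv' (n + 1)
    simpa using hcont.bounded_above_of_compact_support hsupp

noncomputable def smoothCutoff (t ε y : ℝ) : ℝ := smoothTransition (ε⁻¹ * (t + ε - y))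

section smoothCutoff

variable {t ε : ℝ}

theorem smoothCutoff_nonneg (y : ℝ) : 0 ≤ smoothCutoff t ε y := smoothTransition.nonneg _

theorem smoothCutoff_le_one (y : ℝ) : smoothCutoff t ε y ≤ 1 := smoothTransition.le_one _

theorem smoothCutoff_of_le (hε : 0 < ε) {y : ℝ} (hy : y ≤ t) : smoothCutoff t ε y = 1 := by
  refine smoothTransition.one_of_one_le ?_
  rw [← inv_mul_cancel₀ hε.ne']
  gcongr
  linarith

theorem smoothCutoff_of_ge (hε : 0 ≤ ε) {y : ℝ} (hy : t + ε ≤ y) : smoothCutoff t ε y = 0 :=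
  smoothTransition.zero_of_nonpos <|
    mul_nonpos_of_nonneg_of_nonpos (inv_nonneg.mpr hε) (by linarith)

theorem contDiff_smoothCutoff {n : ℕ∞} : ContDiff ℝ n (smoothCutoff t ε) :=
  smoothTransition.contDiff.comp (by fun_prop)

theorem iteratedDeriv_smoothCutoff (n : ℕ) (y : ℝ) :
    iteratedDeriv n (smoothCutoff t ε) y =
      (-ε⁻¹) ^ n * iteratedDeriv n smoothTransition (ε⁻¹ * (t + ε - y)) := by
  have hsub := iteratedDeriv_comp_const_sub n (fun z => smoothTransition (ε⁻¹ * z)) (t + ε)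
  rw [funext_iff] at hsub
  change iteratedDeriv n (fun y => smoothTransition (ε⁻¹ * (t + ε - y))) y = _
  rw [hsub, iteratedDeriv_comp_const_mul smoothTransition.contDiff, smul_eq_mul, neg_pow]
  ring

theorem abs_iteratedDeriv_smoothCutoff_le (hε : 0 < ε) {n : ℕ} {K : ℝ}
    (hK : ∀ x, |iteratedDeriv n smoothTransition x| ≤ K) (y : ℝ) :
    |iteratedDeriv n (smoothCutoff t ε) y| ≤ K * ε⁻¹ ^ n := by
  rw [iteratedDeriv_smoothCutoff, abs_mul, abs_pow, abs_neg, abs_inv, abs_of_pos hε, mul_comm]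
  gcongr
  exact hK _

theorem indicator_Iic_le_smoothCutoff (hε : 0 < ε) : (Iic t).indicator 1 ≤ smoothCutoff t ε := by
  intro y
  by_cases hy : y ∈ Iic t
  · simp [indicator_of_mem hy, smoothCutoff_of_le hε hy]
  · simp [indicator_of_notMem hy, smoothCutoff_nonneg]

theorem smoothCutoff_le_indicator_Iic (hε : 0 ≤ ε) :
    smoothCutoff t ε ≤ (Iic (t + ε)).indicator 1 := by
  intro y
  by_cases hy : y ∈ Iic (t + ε)
  · simp [indicator_of_mem hy, smoothCutoff_le_one]
  · simp [indicator_of_notMem hy, smoothCutoff_of_ge hε (not_le.mp hy).le]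

end smoothCutoff

section Sandwich

variable {α : Type*} [MeasurableSpace α] {μ : Measure α} [IsFiniteMeasure μ] {f : α → ℝ}
  {s : Set α}

theorem measureReal_le_integral_of_indicator_le (hs : MeasurableSet s)
    (hf : AEStronglyMeasurable f μ) (hf1 : f ≤ 1) (h : s.indicator 1 ≤ f) :
    μ.real s ≤ ∫ x, f x ∂μ := by
  have hint : Integrable f μ := by
    refine Integrable.mono' (integrable_const 1) hf (ae_of_all _ fun x => ?_)
    have : 0 ≤ f x := (indicator_nonneg (fun _ _ => zero_le_one) x).trans (h x)
    rw [Real.norm_eq_abs, abs_of_nonneg this]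
    exact hf1 x
  rw [← integral_indicator_one hs]
  exact integral_mono ((integrable_const 1).indicator hs) hint h

theorem integral_le_measureReal_of_le_indicator (hs : MeasurableSet s) (hf0 : 0 ≤ f)
    (h : f ≤ s.indicator 1) : ∫ x, f x ∂μ ≤ μ.real s := by
  rw [← integral_indicator_one hs]
  exact integral_mono_of_nonneg (ae_of_all _ hf0) ((integrable_const 1).indicator hs)
    (ae_of_all _ h)

end Sandwich

theorem abs_measureReal_Iic_sub_le {μ ν : Measure ℝ} [IsFiniteMeasure μ] [IsFiniteMeasure ν]
    {φ : ℝ → ℝ → ℝ} {ε η δ : ℝ} (hφ : ∀ t, Measurable (φ t))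
    (hlow : ∀ t, (Iic t).indicator 1 ≤ φ t) (hup : ∀ t, φ t ≤ (Iic (t + ε)).indicator 1)
    (hν : ∀ t, ν.real (Iic (t + ε)) ≤ ν.real (Iic t) + η)
    (hδ : ∀ t, |∫ y, φ t y ∂μ - ∫ y, φ t y ∂ν| ≤ δ) (x : ℝ) :
    |μ.real (Iic x) - ν.real (Iic x)| ≤ η + δ := by
  have hφ0 : ∀ t, 0 ≤ φ t := fun t y =>
    (indicator_nonneg (fun _ _ => zero_le_one) y).trans (hlow t y)
  have hφ1 : ∀ t, φ t ≤ 1 := fun t =>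
    (hup t).trans (indicator_le_self' fun _ _ => zero_le_one)
  have lower (κ : Measure ℝ) [IsFiniteMeasure κ] (t : ℝ) : κ.real (Iic t) ≤ ∫ y, φ t y ∂κ :=
    measureReal_le_integral_of_indicator_le measurableSet_Iic (hφ t).aestronglyMeasurable
      (hφ1 t) (hlow t)
  have upper (κ : Measure ℝ) [IsFiniteMeasure κ] (t : ℝ) :
      ∫ y, φ t y ∂κ ≤ κ.real (Iic (t + ε)) :=
    integral_le_measureReal_of_le_indicator measurableSet_Iic (hφ0 t) (hup t)
  refine abs_sub_le_iff.mpr ⟨?_, ?_⟩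
  · linarith [lower μ x, upper ν x, hν x, (abs_sub_le_iff.mp (hδ x)).1]
  · have hμ := upper μ (x - ε)
    have hν' := hν (x - ε)
    rw [sub_add_cancel] at hμ hν'
    linarith [lower ν (x - ε), (abs_sub_le_iff.mp (hδ (x - ε))).2]

theorem measureReal_le_mul_measureReal_of_density_le {α : Type*} [MeasurableSpace α]
    {ρ ν : Measure α} {p : α → ℝ} {M : ℝ}
    (hp : ∀ s, MeasurableSet s → ν.real s = ∫ x in s, p x ∂ρ) (hp0 : ∀ x, 0 ≤ p x)
    (hpM : ∀ x, p x ≤ M) {s : Set α} (hs : MeasurableSet s) (hρs : ρ s ≠ ⊤) :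
    ν.real s ≤ M * ρ.real s := by
  rw [hp s hs, mul_comm, ← smul_eq_mul, ← setIntegral_const]
  exact integral_mono_of_nonneg (ae_of_all _ hp0) (integrableOn_const hρs) (ae_of_all _ hpM)

theorem measureReal_Iic_add_le_of_density_le {ν : Measure ℝ} [IsFiniteMeasure ν] {p : ℝ → ℝ}
    {M ε : ℝ} (hp : ∀ s, MeasurableSet s → ν.real s = ∫ x in s, p x) (hp0 : ∀ x, 0 ≤ p x)
    (hpM : ∀ x, p x ≤ M) (hε : 0 ≤ ε) (t : ℝ) :
    ν.real (Iic (t + ε)) ≤ ν.real (Iic t) + M * ε := by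
  rw [← Iic_union_Ioc_eq_Iic (le_add_of_nonneg_right hε),
    measureReal_union (Iic_disjoint_Ioc le_rfl) measurableSet_Ioc]
  gcongr
  have h := measureReal_le_mul_measureReal_of_density_le hp hp0 hpM measurableSet_Ioc
    (measure_Ioc_lt_top (a := t) (b := t + ε)).ne
  rwa [Real.volume_real_Ioc_of_le (le_add_of_nonneg_right hε), add_sub_cancel_left] at h

theorem pow_le_pow_add_pow {R : Type*} [Semiring R] [LinearOrder R] [IsStrictOrderedRing R]
    {x : R} (hx : 0 ≤ x) {a k b : ℕ} (hak : a ≤ k) (hkb : k ≤ b) : x ^ k ≤ x ^ a + x ^ b := by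
  rcases le_total x 1 with h | h
  · exact (pow_le_pow_of_le_one hx h hak).trans (le_add_of_nonneg_right (pow_nonneg hx b))
  · exact (pow_le_pow_right₀ h hkb).trans (le_add_of_nonneg_left (pow_nonneg hx a))

theorem smoothing_error_le {M ε : ℝ} (hM : 0 ≤ M) (hε : 0 < ε) {K : ℕ → ℝ} (hK : ∀ n, 0 ≤ K n) :
    M * ε + ε ^ 4 * (K 0 * ε⁻¹ ^ 0 + K 1 * ε⁻¹ ^ 1 + K 2 * ε⁻¹ ^ 2 + K 3 * ε⁻¹ ^ 3) ≤
      (M + K 0 + K 1 + K 2 + K 3) * (ε + ε ^ 4) := by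
  have hpow (k : ℕ) (hk1 : 1 ≤ k) (hk4 : k ≤ 4) : ε ^ k ≤ ε + ε ^ 4 := by
    simpa using pow_le_pow_add_pow hε.le hk1 hk4
  have hε4 : ε ≤ ε + ε ^ 4 := le_add_of_nonneg_right (by positivity)
  have := hK 0
  have := hK 1
  have := hK 2
  have := hK 3
  calc M * ε + ε ^ 4 * (K 0 * ε⁻¹ ^ 0 + K 1 * ε⁻¹ ^ 1 + K 2 * ε⁻¹ ^ 2 + K 3 * ε⁻¹ ^ 3)
      = M * ε + K 0 * ε ^ 4 + K 1 * ε ^ 3 + K 2 * ε ^ 2 + K 3 * ε := by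
        field_simp
        ring
    _ ≤ M * (ε + ε ^ 4) + K 0 * (ε + ε ^ 4) + K 1 * (ε + ε ^ 4) + K 2 * (ε + ε ^ 4)
          + K 3 * (ε + ε ^ 4) := by
        gcongr <;> exact hpow _ (by norm_num) (by norm_num)
    _ = (M + K 0 + K 1 + K 2 + K 3) * (ε + ε ^ 4) := by ring

/-- Smoothing inequality: a smooth-Wasserstein-type bound of size `D` plus a bounded
density for `ν` give a Kolmogorov-distance bound `C (D^{1/4} + D)`. -/
theorem smoothing_inequality (M : ℝ) (hM : 0 < M) :
    ∃ C : ℝ, 0 < C ∧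
      ∀ (μ ν : Measure ℝ), IsProbabilityMeasure μ → IsProbabilityMeasure ν →
      ∀ (p : ℝ → ℝ), (∀ s : Set ℝ, MeasurableSet s → (ν s).toReal = ∫ x in s, p x) →
        (∀ x, 0 ≤ p x) → (∀ x, p x ≤ M) →
      ∀ D : ℝ, 0 < D →
        (∀ f : ℝ → ℝ, ContDiff ℝ 3 f →
          ∀ M0 M1 M2 M3 : ℝ,
            (∀ x, |f x| ≤ M0) → (∀ x, |deriv f x| ≤ M1) →
            (∀ x, |deriv (deriv f) x| ≤ M2) → (∀ x, |deriv (deriv (deriv f)) x| ≤ M3) →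
            |(∫ x, f x ∂μ) - ∫ x, f x ∂ν| ≤ D * (M0 + M1 + M2 + M3)) →
        ∀ x : ℝ, |(μ (Set.Iic x)).toReal - (ν (Set.Iic x)).toReal| ≤
          C * (D ^ ((1:ℝ)/4) + D) := by
  choose K hK using smoothTransition.exists_abs_iteratedDeriv_le
  have hK0 (n : ℕ) : 0 ≤ K n := (abs_nonneg _).trans (hK n 0)
  refine ⟨M + K 0 + K 1 + K 2 + K 3, by linarith [hK0 0, hK0 1, hK0 2, hK0 3], ?_⟩
  intro μ ν _ _ p hp hp0 hpM D hD hsmooth x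
  set ε := D ^ ((1:ℝ)/4)
  have hε : 0 < ε := by positivity
  have hDε : D = ε ^ 4 := by
    rw [← Real.rpow_natCast, ← Real.rpow_mul hD.le]
    norm_num
  have hbound (n : ℕ) (t y : ℝ) : |deriv^[n] (smoothCutoff t ε) y| ≤ K n * ε⁻¹ ^ n := by
    rw [← iteratedDeriv_eq_iterate]
    exact abs_iteratedDeriv_smoothCutoff_le hε (hK n) y
  have hδ (t : ℝ) := hsmooth _ contDiff_smoothCutoff _ _ _ _
    (hbound 0 t) (hbound 1 t) (hbound 2 t) (hbound 3 t)
  calc |(μ (Iic x)).toReal - (ν (Iic x)).toReal|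
      ≤ M * ε + D * (K 0 * ε⁻¹ ^ 0 + K 1 * ε⁻¹ ^ 1 + K 2 * ε⁻¹ ^ 2 + K 3 * ε⁻¹ ^ 3) :=
        abs_measureReal_Iic_sub_le
          (fun _ => (contDiff_smoothCutoff (n := 0)).continuous.measurable)
          (fun _ => indicator_Iic_le_smoothCutoff hε) (fun _ => smoothCutoff_le_indicator_Iic hε.le)
          (measureReal_Iic_add_le_of_density_le hp hp0 hpM hε.le) hδ x
    _ ≤ (M + K 0 + K 1 + K 2 + K 3) * (ε + D) := by
        rw [hDε]
        exact smoothing_error_le hM.le hε hK0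
end
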